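/- arXiv:0802.3861 — 4 statements merged into one kernel-verified Lean document; each statement's English description precedes it below -/
import Mathlib

section
/- Let f, g be regular functions on B(0,R) with f(q) = Σₙ qⁿ aₙ, g(q) = Σₙ qⁿ bₙ, and define their regular product f*g(q) = Σₙ qⁿ cₙ with cₙ = Σ_{k=0}^{n} aₖ b_{n−k}. Then for every q ∈ B(0,R) with f(q) ≠ 0, one has f*g(q) = f(q) · g( f(q)⁻¹ q f(q) ). -/
open Quaternion Finset

/-!
Group the double series `∑_{k,m} q^(k+m) a_k b_m` by `m` first: since
`q^(k+m) a_k b_m = q^m (q^k a_k) b_m`, the inner sum is `q^m f(q) b_m`, and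
`q^m f(q) = f(q) (f(q)⁻¹ q f(q))^m`, so the outer sum is `f(q) g(f(q)⁻¹ q f(q))`.
Grouping by `k + m = n` instead gives the series of `f*g`. Both regroupings are
legitimate because the coefficient series converge absolutely strictly inside the ball.
-/

theorem HasSum.sum_antidiagonal {α A : Type*} [AddCommMonoid α] [TopologicalSpace α]
    [ContinuousAdd α] [RegularSpace α] [AddCommMonoid A] [HasAntidiagonal A]
    {F : A × A → α} {s : α} (h : HasSum F s) :
    HasSum (fun n => ∑ kl ∈ antidiagonal n, F kl) s :=
  (HasAntidiagonal.sigmaAntidiagonalEquivProd.hasSum_iff.2 h).sigma fun n => by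
    rw [← sum_finset_coe]
    exact hasSum_fintype _

theorem summable_pow_mul_norm_of_summable {𝕜 : Type*} [NormedDivisionRing 𝕜] {x : 𝕜}
    {a : ℕ → 𝕜} {r : ℝ} (h : Summable fun n => x ^ n * a n) (hr : 0 ≤ r) (hrx : r < ‖x‖) :
    Summable fun n => r ^ n * ‖a n‖ := by
  obtain ⟨C, hC⟩ := h.tendsto_atTop_zero.norm.bddAbove_range
  have hx : 0 < ‖x‖ := hr.trans_lt hrx
  have hρ : r / ‖x‖ < 1 := (div_lt_one hx).2 hrx
  refine (summable_geometric_of_lt_one (by positivity) hρ |>.mul_left C).of_nonneg_of_le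
    (fun n => by positivity) fun n => ?_
  have hCn : ‖x‖ ^ n * ‖a n‖ ≤ C := by simpa [norm_mul, norm_pow] using hC ⟨n, rfl⟩
  calc r ^ n * ‖a n‖ = (r / ‖x‖) ^ n * (‖x‖ ^ n * ‖a n‖) := by
        rw [div_pow]; field_simp
    _ ≤ (r / ‖x‖) ^ n * C := by gcongr
    _ = C * (r / ‖x‖) ^ n := mul_comm _ _

theorem hasSum_pow_mul_cauchy_product {𝕜 : Type*} [NormedDivisionRing 𝕜] [CompleteSpace 𝕜]
    {q s t : 𝕜} {a b : ℕ → 𝕜} (ha : Summable fun n => ‖q‖ ^ n * ‖a n‖)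
    (hb : Summable fun n => ‖q‖ ^ n * ‖b n‖) (hf : HasSum (fun n => q ^ n * a n) s)
    (hs : s ≠ 0) (hg : HasSum (fun n => (s⁻¹ * q * s) ^ n * b n) t) :
    HasSum (fun n => q ^ n * ∑ k ∈ range (n + 1), a k * b (n - k)) (s * t) := by
  set F : ℕ × ℕ → 𝕜 := fun mk => q ^ mk.1 * (q ^ mk.2 * a mk.2) * b mk.1
  have hF : Summable F := by
    refine Summable.of_norm ?_
    have hnorm : (fun mk => ‖F mk‖)
        = fun mk : ℕ × ℕ => (‖q‖ ^ mk.1 * ‖b mk.1‖) * (‖q‖ ^ mk.2 * ‖a mk.2‖) := by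
      ext mk; simp only [F, norm_mul, norm_pow]; ring
    rw [hnorm]
    exact hb.mul_of_nonneg ha (fun _ => by positivity) fun _ => by positivity
  have hfiber : ∀ m, HasSum (fun k => F (m, k)) (s * ((s⁻¹ * q * s) ^ m * b m)) := by
    intro m
    rw [GroupWithZero.conj_pow₀ hs, ← mul_assoc, ← mul_assoc, ← mul_assoc,
      mul_inv_cancel₀ hs, one_mul]
    exact (hf.mul_left (q ^ m)).mul_right (b m)
  have hFsum : HasSum F (s * t) := by
    rw [(hg.mul_left s).unique (hF.hasSum.prod_fiberwise hfiber)]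
    exact hF.hasSum
  convert hFsum.sum_antidiagonal using 1
  ext n
  rw [← Nat.sum_antidiagonal_swap, Nat.sum_antidiagonal_eq_sum_range_succ_mk, mul_sum]
  refine sum_congr rfl fun k hk => ?_
  have hkn : n - k + k = n := Nat.sub_add_cancel (Nat.lt_succ_iff.1 (mem_range.1 hk))
  simp only [F, Prod.swap_prod_mk, ← mul_assoc, ← pow_add, hkn]

/-- The regular product satisfies `f*g(q) = f(q) · g(f(q)⁻¹ q f(q))` wherever `f(q) ≠ 0`:
the series defining `f*g` converges at `q` to `f(q) * g(f(q)⁻¹ q f(q))`. -/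
theorem regular_product_formula
    (R : ℝ) (a b : ℕ → ℍ[ℝ]) (f g : ℍ[ℝ] → ℍ[ℝ])
    (hf : ∀ q ∈ Metric.ball (0 : ℍ[ℝ]) R, HasSum (fun n => q ^ n * a n) (f q))
    (hg : ∀ q ∈ Metric.ball (0 : ℍ[ℝ]) R, HasSum (fun n => q ^ n * b n) (g q)) :
    ∀ q ∈ Metric.ball (0 : ℍ[ℝ]) R, f q ≠ 0 →
      HasSum (fun n => q ^ n * ∑ k ∈ range (n + 1), a k * b (n - k))
        (f q * g ((f q)⁻¹ * q * f q)) := by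
  intro q hq hfq
  rw [mem_ball_zero_iff] at hq
  obtain ⟨r, hqr, hrR⟩ := exists_between hq
  have hr : ‖(r : ℍ[ℝ])‖ = r := by
    rw [norm_coe, Real.norm_of_nonneg ((norm_nonneg q).trans hqr.le)]
  have habs : ∀ c : ℕ → ℍ[ℝ], (∀ x ∈ Metric.ball (0 : ℍ[ℝ]) R, Summable fun n => x ^ n * c n) →
      Summable fun n => ‖q‖ ^ n * ‖c n‖ := fun c hc =>
    summable_pow_mul_norm_of_summable (hc r (by rwa [mem_ball_zero_iff, hr]))
      (norm_nonneg q) (by rwa [hr])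
  have hconj : (f q)⁻¹ * q * f q ∈ Metric.ball (0 : ℍ[ℝ]) R := by
    rwa [mem_ball_zero_iff, norm_mul, norm_mul, norm_inv, mul_right_comm,
      inv_mul_cancel₀ (norm_ne_zero_iff.2 hfq), one_mul]
  exact hasSum_pow_mul_cauchy_product (habs a fun x hx => (hf x hx).summable)
    (habs b fun x hx => (hg x hx).summable) (hf q (mem_ball_zero_iff.2 hq)) hfq (hg _ hconj)
end

section
/- (Identity Principle) Let Ω ⊆ ℍ be a domain intersecting the real axis such that Ω ∩ L_I is connected for every imaginary unit I ∈ 𝕊. If f, g : Ω → ℍ are regular functions which coincide on Ω ∩ ℝ, then f = g on Ω. -/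
/-!
For `I² = -1` the map `x + iy ↦ x + yI` is an isometric `ℝ`-algebra embedding `ℂ → ℍ` onto the
slice `L_I`, and letting `ℂ` act on `ℍ` by left multiplication through it turns `ℍ` into a complex
Banach space. For that structure the Cauchy–Riemann condition in the definition of regularity says
precisely that `f` restricted to `L_I` is holomorphic. As `Ω ∩ L_I` is connected and contains a
real point, at which real points of `Ω` accumulate, the one-variable identity theorem gives
`f = g` on `Ω ∩ L_I`; and every quaternion lies on some slice.
-/

open Quaternion

/-- Cullen regularity: the restriction of `f` to each slice `L_I = ℝ + Iℝ` satisfies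
the Cauchy–Riemann equation `∂f/∂y = I ∂f/∂x`. -/
def SliceRegularOn (Ω : Set ℍ[ℝ]) (f : ℍ[ℝ] → ℍ[ℝ]) : Prop :=
  ∀ I : ℍ[ℝ], I ^ 2 = -1 → ∀ x y : ℝ, (x : ℍ[ℝ]) + y • I ∈ Ω →
    DifferentiableAt ℝ (fun p : ℝ × ℝ => f ((p.1 : ℍ[ℝ]) + p.2 • I)) (x, y) ∧
    fderiv ℝ (fun p : ℝ × ℝ => f ((p.1 : ℍ[ℝ]) + p.2 • I)) (x, y) (0, 1) =
      I * fderiv ℝ (fun p : ℝ × ℝ => f ((p.1 : ℍ[ℝ]) + p.2 • I)) (x, y) (1, 0)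

/-- The complex line `L_I = ℝ + Iℝ`. -/
def complexLine (I : ℍ[ℝ]) : Set ℍ[ℝ] := {q | ∃ x y : ℝ, q = (x : ℍ[ℝ]) + y • I}

open Set Filter Topology

namespace Quaternion

theorem normSq_eq_one_of_sq_eq_neg_one {I : ℍ[ℝ]} (hI : I ^ 2 = -1) : normSq I = 1 := by
  have h : normSq I ^ 2 = 1 := by rw [← map_pow, hI, normSq_neg, map_one]
  exact (pow_eq_one_iff_of_nonneg normSq_nonneg two_ne_zero).mp h

theorem re_eq_zero_of_sq_eq_neg_one {I : ℍ[ℝ]} (hI : I ^ 2 = -1) : I.re = 0 :=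
  sq_eq_neg_normSq.mp <| by rw [hI, normSq_eq_one_of_sq_eq_neg_one hI, coe_one]

theorem exists_sq_eq_neg_one_mem_complexLine (q : ℍ[ℝ]) :
    ∃ I : ℍ[ℝ], I ^ 2 = -1 ∧ q ∈ complexLine I := by
  by_cases him : q.im = 0
  · refine ⟨(Complex.I : ℍ[ℝ]), ?_, q.re, 0, by simpa [him] using (re_add_im q).symm⟩
    rw [sq, ← coeComplex_mul, Complex.I_mul_I]
    ext <;> simp
  · have hn : ‖q.im‖ ≠ 0 := norm_ne_zero_iff.mpr him
    refine ⟨‖q.im‖⁻¹ • q.im, ?_, q.re, ‖q.im‖, ?_⟩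
    · rw [smul_pow, im_sq, normSq_eq_norm_mul_self, smul_neg, smul_coe, ← sq, ← mul_pow,
        inv_mul_cancel₀ hn, one_pow, coe_one]
    · rw [smul_smul, mul_inv_cancel₀ hn, one_smul, re_add_im]

end Quaternion

theorem hasFDerivAt_complex_of_cauchyRiemann {E : Type*} [NormedAddCommGroup E]
    [NormedSpace ℝ E] [NormedSpace ℂ E] [IsScalarTower ℝ ℂ E] {K : ℝ × ℝ → E}
    {D : ℝ × ℝ →L[ℝ] E} {z : ℂ} (hK : HasFDerivAt K D (z.re, z.im))
    (hCR : D (0, 1) = Complex.I • D (1, 0)) :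
    HasFDerivAt (fun w : ℂ => K (w.re, w.im))
      (ContinuousLinearMap.toSpanSingleton ℂ (D (1, 0))) z := by
  refine hasFDerivAt_of_restrictScalars ℝ (hK.comp z Complex.equivRealProdCLM.hasFDerivAt) ?_
  ext w
  have hw : Complex.equivRealProdCLM w = w.re • ((1 : ℝ), (0 : ℝ)) + w.im • ((0 : ℝ), (1 : ℝ)) :=
    by simp
  simp only [ContinuousLinearMap.coe_restrictScalars', ContinuousLinearMap.toSpanSingleton_apply,
    ContinuousLinearMap.comp_apply, ContinuousLinearEquiv.coe_coe, hw, map_add, map_smul, hCR]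
  conv_lhs => rw [← Complex.re_add_im w]
  rw [add_smul, mul_smul, ← Complex.coe_algebraMap, algebraMap_smul, algebraMap_smul]

section SliceEmbedding

variable {I : ℍ[ℝ]} (hI : I ^ 2 = -1)

noncomputable def sliceEmbedding : ℂ →ₐ[ℝ] ℍ[ℝ] := Complex.liftAux I (by rwa [← sq])

theorem sliceEmbedding_apply (z : ℂ) : sliceEmbedding hI z = (z.re : ℍ[ℝ]) + z.im • I := rfl

theorem sliceEmbedding_ofReal (x : ℝ) : sliceEmbedding hI x = (x : ℍ[ℝ]) :=
  (sliceEmbedding hI).commutes x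

theorem sliceEmbedding_I : sliceEmbedding hI Complex.I = I :=
  Complex.liftAux_apply_I _ _

theorem star_sliceEmbedding (z : ℂ) :
    star (sliceEmbedding hI z) = sliceEmbedding hI (starRingEnd ℂ z) := by
  have hstar : star I = -I := star_eq_neg.mpr (re_eq_zero_of_sq_eq_neg_one hI)
  simp [sliceEmbedding_apply, hstar]

theorem norm_sliceEmbedding (z : ℂ) : ‖sliceEmbedding hI z‖ = ‖z‖ := by
  have h : ((Quaternion.normSq (sliceEmbedding hI z) : ℝ) : ℍ[ℝ]) = (Complex.normSq z : ℍ[ℝ]) :=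
    by rw [← Quaternion.self_mul_star, star_sliceEmbedding, ← map_mul, Complex.mul_conj,
      sliceEmbedding_ofReal]
  rw [coe_injective.eq_iff, normSq_eq_norm_mul_self, Complex.normSq_eq_norm_sq, ← sq] at h
  exact (sq_eq_sq₀ (norm_nonneg _) (norm_nonneg _)).mp h

theorem isometry_sliceEmbedding : Isometry (sliceEmbedding hI) :=
  AddMonoidHomClass.isometry_of_norm _ (norm_sliceEmbedding hI)

theorem range_sliceEmbedding : range (sliceEmbedding hI) = complexLine I := by
  ext q
  constructor
  · rintro ⟨z, rfl⟩
    exact ⟨z.re, z.im, rfl⟩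
  · rintro ⟨x, y, rfl⟩
    exact ⟨⟨x, y⟩, rfl⟩

noncomputable abbrev sliceNormedSpace : NormedSpace ℂ ℍ[ℝ] where
  toModule := Module.compHom ℍ[ℝ] (sliceEmbedding hI).toRingHom
  norm_smul_le z q := by
    change ‖sliceEmbedding hI z * q‖ ≤ ‖z‖ * ‖q‖
    rw [norm_mul, norm_sliceEmbedding]

theorem sliceNormedSpace_isScalarTower :
    letI := sliceNormedSpace hI
    IsScalarTower ℝ ℂ ℍ[ℝ] := by
  let _ := sliceNormedSpace hI
  refine ⟨fun x z q => ?_⟩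
  change sliceEmbedding hI (x • z) * q = x • (sliceEmbedding hI z * q)
  rw [map_smul, smul_mul_assoc]

end SliceEmbedding

theorem DifferentiableOn.eqOn_of_preconnected_of_eq_on_real {E : Type*} [NormedAddCommGroup E]
    [NormedSpace ℂ E] [CompleteSpace E] {F G : ℂ → E} {U : Set ℂ} (hF : DifferentiableOn ℂ F U)
    (hG : DifferentiableOn ℂ G U) (hUo : IsOpen U) (hU : IsPreconnected U) {x₀ : ℝ}
    (hx₀ : (x₀ : ℂ) ∈ U) (hFG : ∀ x : ℝ, (x : ℂ) ∈ U → F x = G x) : EqOn F G U := by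
  refine (hF.analyticOnNhd hUo).eqOn_of_preconnected_of_frequently_eq (hG.analyticOnNhd hUo) hU
    hx₀ ?_
  have hreal : Tendsto ((↑) : ℝ → ℂ) (𝓝[≠] x₀) (𝓝[≠] (x₀ : ℂ)) :=
    tendsto_nhdsWithin_of_tendsto_nhds_of_eventually_within _
      (Complex.continuous_ofReal.continuousAt.tendsto.mono_left nhdsWithin_le_nhds)
      (eventually_nhdsWithin_of_forall fun x hx => Complex.ofReal_injective.ne hx)
  have hnear : ∀ᶠ x : ℝ in 𝓝[≠] x₀, F x = G x :=
    eventually_nhdsWithin_of_eventually_nhds <|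
      Filter.mem_of_superset
        (Complex.continuous_ofReal.continuousAt.preimage_mem_nhds (hUo.mem_nhds hx₀)) hFG
  exact hreal.frequently hnear.frequently

section SliceRegular

variable {Ω : Set ℍ[ℝ]} {I : ℍ[ℝ]}

theorem SliceRegularOn.differentiableOn_comp_sliceEmbedding {f : ℍ[ℝ] → ℍ[ℝ]}
    (hf : SliceRegularOn Ω f) (hI : I ^ 2 = -1) :
    letI := sliceNormedSpace hI
    DifferentiableOn ℂ (f ∘ sliceEmbedding hI) (sliceEmbedding hI ⁻¹' Ω) := by
  let _ := sliceNormedSpace hI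
  have _ := sliceNormedSpace_isScalarTower hI
  intro z hz
  obtain ⟨hdiff, hCR⟩ := hf I hI z.re z.im hz
  exact (hasFDerivAt_complex_of_cauchyRiemann hdiff.hasFDerivAt
    (hCR.trans <| congrArg (· * _) (sliceEmbedding_I hI).symm)).differentiableAt
    |>.differentiableWithinAt

theorem SliceRegularOn.eqOn_complexLine (hI : I ^ 2 = -1) (hΩ : IsOpen Ω)
    (hΩI : IsPreconnected (Ω ∩ complexLine I)) {x₀ : ℝ} (hx₀ : (x₀ : ℍ[ℝ]) ∈ Ω)
    {f g : ℍ[ℝ] → ℍ[ℝ]} (hf : SliceRegularOn Ω f) (hg : SliceRegularOn Ω g)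
    (heq : ∀ x : ℝ, (x : ℍ[ℝ]) ∈ Ω → f x = g x) : EqOn f g (Ω ∩ complexLine I) := by
  let _ := sliceNormedSpace hI
  set φ := sliceEmbedding hI
  have hφ := isometry_sliceEmbedding hI
  have hU : IsPreconnected (φ ⁻¹' Ω) := by
    rwa [← hφ.isEmbedding.isInducing.isPreconnected_image, image_preimage_eq_inter_range,
      range_sliceEmbedding]
  have hslice : EqOn (f ∘ φ) (g ∘ φ) (φ ⁻¹' Ω) :=
    (hf.differentiableOn_comp_sliceEmbedding hI).eqOn_of_preconnected_of_eq_on_real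
      (hg.differentiableOn_comp_sliceEmbedding hI) (hΩ.preimage hφ.continuous) hU
      (x₀ := x₀) (by rwa [mem_preimage, sliceEmbedding_ofReal])
      (fun x hx => by
        rw [mem_preimage, sliceEmbedding_ofReal] at hx
        rw [Function.comp_apply, Function.comp_apply, sliceEmbedding_ofReal]
        exact heq x hx)
  rintro _ ⟨hq, x, y, rfl⟩
  exact hslice (x := ⟨x, y⟩) hq

end SliceRegular

theorem identity_principle_general
    (Ω : Set ℍ[ℝ]) (hopen : IsOpen Ω)
    (hreal : (Ω ∩ Set.range (fun x : ℝ => (x : ℍ[ℝ]))).Nonempty)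
    (hslice : ∀ I : ℍ[ℝ], I ^ 2 = -1 → IsConnected (Ω ∩ complexLine I))
    (f g : ℍ[ℝ] → ℍ[ℝ])
    (hf : SliceRegularOn Ω f) (hg : SliceRegularOn Ω g)
    (heq : ∀ x : ℝ, (x : ℍ[ℝ]) ∈ Ω → f (x : ℍ[ℝ]) = g (x : ℍ[ℝ])) :
    Set.EqOn f g Ω := by
  obtain ⟨_, hx₀, x₀, rfl⟩ := hreal
  intro q hq
  obtain ⟨I, hI, hqI⟩ := Quaternion.exists_sq_eq_neg_one_mem_complexLine q
  exact hf.eqOn_complexLine hI hopen (hslice I hI).isPreconnected hx₀ hg heq ⟨hq, hqI⟩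

/-- Identity Principle: regular functions on a domain which intersects the real axis
and has connected intersection with every complex line coincide as soon as they
coincide on the real points of the domain. -/
theorem identity_principle
    (Ω : Set ℍ[ℝ]) (hopen : IsOpen Ω) (hconn : IsConnected Ω)
    (hreal : (Ω ∩ Set.range (fun x : ℝ => (x : ℍ[ℝ]))).Nonempty)
    (hslice : ∀ I : ℍ[ℝ], I ^ 2 = -1 → IsConnected (Ω ∩ complexLine I))
    (f g : ℍ[ℝ] → ℍ[ℝ])
    (hf : SliceRegularOn Ω f) (hg : SliceRegularOn Ω g)
    (heq : ∀ x : ℝ, (x : ℍ[ℝ]) ∈ Ω → f (x : ℍ[ℝ]) = g (x : ℍ[ℝ])) :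
    Set.EqOn f g Ω :=
  identity_principle_general Ω hopen hreal hslice f g hf hg heq
end

section
/- Let f : B(0,R) → ℍ be a non-constant regular function and let D_f = ⋃{x + y𝕊 : x, y ∈ ℝ, y > 0, x + y𝕊 ⊆ B(0,R), f is constant on x + y𝕊} be its degenerate set. Then D_f is closed in B(0,R) ∖ ℝ and has empty interior. -/
open Quaternion

/-- The 2-sphere `x + y𝕊`. -/
def sphereSet (x y : ℝ) : Set ℍ[ℝ] :=
  {q | ∃ K : ℍ[ℝ], K ^ 2 = -1 ∧ q = (x : ℍ[ℝ]) + y • K}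

/-- The degenerate set of `f`: the union of all 2-spheres `x + y𝕊` (`y > 0`)
contained in `B(0,R)` on which `f` is constant. -/
def degenerateSet (R : ℝ) (f : ℍ[ℝ] → ℍ[ℝ]) : Set ℍ[ℝ] :=
  {q | ∃ x y : ℝ, y > 0 ∧ sphereSet x y ⊆ Metric.ball (0 : ℍ[ℝ]) R ∧
    (∃ w : ℍ[ℝ], ∀ p ∈ sphereSet x y, f p = w) ∧ q ∈ sphereSet x y}

/-!
The sphere `x + y𝕊` (`y > 0`) through `q` is the set of `p` with `p.re = q.re` and
`‖p.im‖ = ‖q.im‖`, and it lies in the ball as soon as `q` does.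

Closedness: moving a point `u` within its own sphere towards a fixed direction is continuous in `u`,
so constancy of the continuous function `f` on the spheres of a sequence passes to the sphere of the
limit.

Empty interior: on an open set of degenerate spheres `f ∘ star = f`, hence on the whole ball by the
identity principle for real-analytic functions. On the real line `t ↦ t • u` this identity reads
`∑ tⁿ (uⁿ - ūⁿ) aₙ = 0`, so `(uⁿ - ūⁿ) aₙ = 0` for every `u`; an `n`-th root `u` of `i` makes
`uⁿ - ūⁿ = 2i` invertible. Thus `aₙ = 0` for `n ≥ 1` and `f` is constant.
-/

open Metric Filter Topology Set

section PowerSeries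

variable {E F : Type*} [NormedAddCommGroup E] [NormedSpace ℝ E]
  [NormedAddCommGroup F] [NormedSpace ℝ F]

theorem FormalMultilinearSeries.hasFPowerSeriesOnBall_of_hasSum
    {p : FormalMultilinearSeries ℝ E F} {f : E → F} {R : ℝ} (hR : 0 < R) {e : E} (he : ‖e‖ = 1)
    (hp : ∀ n, ‖p n‖ ≤ ‖p n fun _ => e‖)
    (hf : ∀ y ∈ ball (0 : E) R, HasSum (fun n => p n fun _ => y) (f y)) :
    HasFPowerSeriesOnBall f p 0 (ENNReal.ofReal R) := by
  refine ⟨ENNReal.le_of_forall_nnreal_lt fun r hr => ?_, ENNReal.ofReal_pos.mpr hR,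
    fun {y} hy => by simpa using hf y (by simpa using hy)⟩
  have hrR : (r : ℝ) < R := by simpa using (ENNReal.lt_ofReal_iff_toReal_lt (by simp)).mp hr
  have hsum := (hf ((r : ℝ) • e) (by simpa [norm_smul, he] using hrR)).summable
  refine p.le_radius_of_isBigO ((Asymptotics.isBigO_of_le _ fun n => ?_).trans
    (hsum.tendsto_atTop_zero.isBigO_one ℝ))
  rw [ContinuousMultilinearMap.map_smul_univ, Finset.prod_const, Finset.card_univ,
    Fintype.card_fin, norm_smul, norm_pow, Real.norm_of_nonneg (by positivity)]
  simp only [NNReal.norm_eq, mul_comm (‖p n‖)]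
  exact mul_le_mul_of_nonneg_left (hp n) (by simp)

theorem eq_zero_of_hasSum_pow_smul {c : ℕ → F} {ε : ℝ} (hε : 0 < ε)
    (h : ∀ t : ℝ, |t| < ε → HasSum (fun n => t ^ n • c n) 0) : c = 0 := by
  set p : FormalMultilinearSeries ℝ ℝ F := fun n =>
    ContinuousMultilinearMap.mkPiRing ℝ (Fin n) (c n)
  have hp : ∀ n t, (p n fun _ => t) = t ^ n • c n := by simp [p]
  have hp0 : p = 0 := HasFPowerSeriesAt.eq_zero <|
    (FormalMultilinearSeries.hasFPowerSeriesOnBall_of_hasSum hε (e := (1 : ℝ)) (by simp)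
      (fun n => by simp [hp, p])
      fun t ht => by simpa [hp] using h t (by simpa using ht)).hasFPowerSeriesAt
  ext1 n
  simpa [hp] using congr($hp0 n fun _ => (1 : ℝ))

end PowerSeries

section Algebra

variable {A : Type*} [NormedRing A] [NormedAlgebra ℝ A]

noncomputable def powMulSeries (a : ℕ → A) : FormalMultilinearSeries ℝ A A := fun n =>
  ((ContinuousLinearMap.mul ℝ A).flip (a n)).compContinuousMultilinearMap
    (ContinuousMultilinearMap.mkPiAlgebraFin ℝ n A)

theorem powMulSeries_apply (a : ℕ → A) (n : ℕ) (q : A) :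
    (powMulSeries a n fun _ => q) = q ^ n * a n := by
  simp [powMulSeries]

theorem norm_powMulSeries_le [NormOneClass A] (a : ℕ → A) (n : ℕ) :
    ‖powMulSeries a n‖ ≤ ‖a n‖ :=
  calc ‖powMulSeries a n‖
      ≤ ‖(ContinuousLinearMap.mul ℝ A).flip (a n)‖ *
          ‖ContinuousMultilinearMap.mkPiAlgebraFin ℝ n A‖ :=
        ContinuousLinearMap.norm_compContinuousMultilinearMap_le _ _
    _ ≤ ‖a n‖ * 1 := by
        rw [ContinuousMultilinearMap.norm_mkPiAlgebraFin]
        gcongr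
        exact ContinuousLinearMap.opNorm_le_bound _ (norm_nonneg _) fun b => by
          simpa [mul_comm] using norm_mul_le b (a n)
    _ = ‖a n‖ := mul_one _

theorem analyticOnNhd_of_hasSum_pow_mul [NormOneClass A] [CompleteSpace A] {a : ℕ → A}
    {f : A → A} {R : ℝ} (hf : ∀ q ∈ ball (0 : A) R, HasSum (fun n => q ^ n * a n) (f q)) :
    AnalyticOnNhd ℝ f (ball 0 R) := by
  rcases le_or_gt R 0 with hR | hR
  · simp [ball_eq_empty.mpr hR]
  have h := (FormalMultilinearSeries.hasFPowerSeriesOnBall_of_hasSum (p := powMulSeries a) hR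
    norm_one (fun n => by simpa [powMulSeries_apply] using norm_powMulSeries_le a n)
    (fun q hq => by simpa [powMulSeries_apply] using hf q hq)).analyticOnNhd
  rwa [Metric.eball_ofReal] at h

end Algebra

namespace Quaternion

theorem re_eq_zero_and_norm_eq_one_of_sq_eq_neg_one {K : ℍ[ℝ]} (hK : K ^ 2 = -1) :
    K.re = 0 ∧ ‖K‖ = 1 := by
  have hnorm : ‖K‖ = 1 := by
    have h := congr(‖$hK‖)
    rw [norm_pow, norm_neg, norm_one] at h
    exact (pow_eq_one_iff_of_nonneg (norm_nonneg K) two_ne_zero).mp h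
  have hK0 : K ≠ 0 := by rintro rfl; simp at hnorm
  have h : K * (star K + K) = 0 := by
    rw [mul_add, self_mul_star, normSq_eq_norm_mul_self, hnorm, ← sq K, hK]
    simp
  have hstar : star K = -K := eq_neg_of_add_eq_zero_left ((mul_eq_zero.mp h).resolve_left hK0)
  exact ⟨star_eq_neg.mp hstar, hnorm⟩

theorem norm_sq_eq_re_sq_add_norm_im_sq (q : ℍ[ℝ]) : ‖q‖ ^ 2 = q.re ^ 2 + ‖q.im‖ ^ 2 := by
  simp only [sq, ← normSq_eq_norm_mul_self, normSq_def']
  simp [add_assoc]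

theorem norm_eq_of_re_eq_of_norm_im_eq {p q : ℍ[ℝ]} (hre : p.re = q.re)
    (him : ‖p.im‖ = ‖q.im‖) : ‖p‖ = ‖q‖ := by
  have := norm_sq_eq_re_sq_add_norm_im_sq p
  rw [hre, him, ← norm_sq_eq_re_sq_add_norm_im_sq q] at this
  exact (sq_eq_sq₀ (norm_nonneg _) (norm_nonneg _)).mp this

theorem im_ne_zero_of_notMem_range_coe {q : ℍ[ℝ]} (hq : q ∉ range ((↑) : ℝ → ℍ[ℝ])) :
    q.im ≠ 0 :=
  fun h => hq ⟨q.re, by rw [← re_add_im q, h, add_zero]; simp⟩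

end Quaternion

theorem mem_sphereSet_iff {x y : ℝ} (hy : 0 < y) {q : ℍ[ℝ]} :
    q ∈ sphereSet x y ↔ q.re = x ∧ ‖q.im‖ = y := by
  constructor
  · rintro ⟨K, hK, rfl⟩
    obtain ⟨hre, hnorm⟩ := re_eq_zero_and_norm_eq_one_of_sq_eq_neg_one hK
    have him : K.im = K := by rw [← re_add_im K, hre]; simp
    simp [hre, him, norm_smul, hnorm, hy.le]
  · rintro ⟨rfl, rfl⟩
    have hy' : q.im ≠ 0 := by rintro h; simp [h] at hy
    refine ⟨‖q.im‖⁻¹ • q.im, ?_, by simp [smul_inv_smul₀ (norm_ne_zero_iff.mpr hy')]⟩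
    rw [sq_eq_neg_normSq.mpr (by simp), normSq_eq_norm_mul_self, norm_smul]
    simp [hy']

theorem mem_degenerateSet_iff {R : ℝ} {f : ℍ[ℝ] → ℍ[ℝ]} {q : ℍ[ℝ]} :
    q ∈ degenerateSet R f ↔ q ∈ ball (0 : ℍ[ℝ]) R ∧ q.im ≠ 0 ∧
      ∀ p : ℍ[ℝ], p.re = q.re → ‖p.im‖ = ‖q.im‖ → f p = f q := by
  constructor
  · rintro ⟨x, y, hy, hball, ⟨w, hw⟩, hq⟩
    obtain ⟨hqre, hqim⟩ := (mem_sphereSet_iff hy).mp hq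
    refine ⟨hball hq, norm_pos_iff.mp (hqim ▸ hy), fun p hre him => ?_⟩
    rw [hw p ((mem_sphereSet_iff hy).mpr ⟨hre.trans hqre, him.trans hqim⟩), hw q hq]
  · rintro ⟨hq, hqim, hconst⟩
    have hy : 0 < ‖q.im‖ := norm_pos_iff.mpr hqim
    refine ⟨q.re, ‖q.im‖, hy, fun p hp => ?_, ⟨f q, fun p hp => ?_⟩,
      (mem_sphereSet_iff hy).mpr ⟨rfl, rfl⟩⟩
    · obtain ⟨hre, him⟩ := (mem_sphereSet_iff hy).mp hp
      simpa [norm_eq_of_re_eq_of_norm_im_eq hre him] using hq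
    · obtain ⟨hre, him⟩ := (mem_sphereSet_iff hy).mp hp
      exact hconst p hre him

section StarInvariant

variable {A : Type*} [NormedRing A] [NormedAlgebra ℝ A] [StarRing A] [StarModule ℝ A]
  [NormedStarGroup A]

theorem pow_sub_star_pow_mul_eq_zero {a : ℕ → A} {f : A → A} {R : ℝ} (hR : 0 < R)
    (hf : ∀ q ∈ ball (0 : A) R, HasSum (fun n => q ^ n * a n) (f q))
    (hstar : ∀ q ∈ ball (0 : A) R, f (star q) = f q) (u : A) (n : ℕ) :
    (u ^ n - star u ^ n) * a n = 0 := by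
  refine congrFun (eq_zero_of_hasSum_pow_smul (c := fun n => (u ^ n - star u ^ n) * a n)
    (ε := R / (‖u‖ + 1)) (by positivity) fun t ht => ?_) n
  have htu : t • u ∈ ball (0 : A) R := by
    rw [lt_div_iff₀ (by positivity)] at ht
    rw [mem_ball_zero_iff, norm_smul, Real.norm_eq_abs]
    nlinarith [abs_nonneg t, norm_nonneg u]
  have hstu : star (t • u) ∈ ball (0 : A) R := by
    rwa [mem_ball_zero_iff, _root_.norm_star, ← mem_ball_zero_iff]
  have h := (hf _ htu).sub (hf _ hstu)
  rw [hstar _ htu, sub_self, StarModule.star_smul, star_trivial] at h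
  simpa only [smul_pow, smul_mul_assoc, ← smul_sub, ← sub_mul] using h

theorem AnalyticOnNhd.star_eqOn_ball {f : A → A} {R : ℝ} (hf : AnalyticOnNhd ℝ f (ball 0 R))
    {q₀ : A} (hq₀ : q₀ ∈ ball (0 : A) R) (h : ∀ᶠ q in 𝓝 q₀, f (star q) = f q) :
    ∀ q ∈ ball (0 : A) R, f (star q) = f q := by
  have hstar : AnalyticOnNhd ℝ (fun q => f (star q)) (ball 0 R) :=
    hf.comp ((starL' ℝ : A ≃L[ℝ] A).toContinuousLinearMap.analyticOnNhd _)
      fun q hq => by simpa [_root_.norm_star] using hq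
  exact hstar.eqOn_of_preconnected_of_eventuallyEq hf (convex_ball 0 R).isPreconnected hq₀ h

end StarInvariant

instance : StarModule ℝ ℍ[ℝ] := ⟨fun r a => by rw [Quaternion.star_smul, star_trivial r]⟩

theorem Quaternion.eq_coeff_zero_of_star_eq {a : ℕ → ℍ[ℝ]} {f : ℍ[ℝ] → ℍ[ℝ]} {R : ℝ}
    (hR : 0 < R) (hf : ∀ q ∈ ball (0 : ℍ[ℝ]) R, HasSum (fun n => q ^ n * a n) (f q))
    (hstar : ∀ q ∈ ball (0 : ℍ[ℝ]) R, f (star q) = f q) :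
    ∀ q ∈ ball (0 : ℍ[ℝ]) R, f q = a 0 := by
  have hcoeff : ∀ n ≠ 0, a n = 0 := fun n hn => by
    obtain ⟨z, hz⟩ := IsAlgClosed.exists_pow_nat_eq Complex.I (Nat.pos_of_ne_zero hn)
    have h := pow_sub_star_pow_mul_eq_zero hR hf hstar (z : ℍ[ℝ]) n
    rw [← star_pow, ← coe_ofComplex, ← map_pow, hz] at h
    refine (mul_eq_zero.mp h).resolve_left fun hI => ?_
    simpa using congr(($hI).imI)
  intro q hq
  exact (hf q hq).unique (hasSum_single 0 fun n hn => by rw [hcoeff n hn, mul_zero]) |>.trans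
    (by simp)

theorem Set.EqOn.eq_of_mem_closure {X Y : Type*} [TopologicalSpace X] [TopologicalSpace Y]
    [T2Space Y] {f g : X → Y} {s : Set X} {x : X} (h : EqOn f g s) (hx : x ∈ closure s)
    (hf : ContinuousAt f x) (hg : ContinuousAt g x) : f x = g x :=
  haveI : (𝓝[s] x).NeBot := mem_closure_iff_clusterPt.mp hx
  tendsto_nhds_unique_of_eventuallyEq (hf.tendsto.mono_left nhdsWithin_le_nhds)
    (hg.tendsto.mono_left nhdsWithin_le_nhds) (h.eventuallyEq_of_mem self_mem_nhdsWithin)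

theorem closure_degenerateSet_inter_subset {R : ℝ} {f : ℍ[ℝ] → ℍ[ℝ]}
    (hf : ContinuousOn f (ball 0 R)) :
    closure (degenerateSet R f) ∩ (ball 0 R \ range ((↑) : ℝ → ℍ[ℝ])) ⊆ degenerateSet R f := by
  rintro q ⟨hq, hqR, hqreal⟩
  have hqim := im_ne_zero_of_notMem_range_coe hqreal
  refine mem_degenerateSet_iff.mpr ⟨hqR, hqim, fun p hre him => ?_⟩
  have hp : ‖p.im‖ ≠ 0 := him ▸ norm_ne_zero_iff.mpr hqim
  set ρ : ℍ[ℝ] → ℍ[ℝ] := fun u => u.re + (‖u.im‖ / ‖p.im‖) • p.im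
  have hρ_re (u : ℍ[ℝ]) : (ρ u).re = u.re := by simp [ρ]
  have hρ_im (u : ℍ[ℝ]) : ‖(ρ u).im‖ = ‖u.im‖ := by
    simp [ρ, norm_smul, div_mul_cancel₀ _ hp]
  have hρq : ρ q = p := by
    simp only [ρ, ← him, div_self hp, one_smul, ← hre, re_add_im]
  have hpR : p ∈ ball (0 : ℍ[ℝ]) R := by
    simpa [norm_eq_of_re_eq_of_norm_im_eq hre him] using hqR
  have hρ : Continuous ρ :=
    (continuous_coe.comp continuous_re).add
      ((continuous_norm.comp continuous_im).div_const _ |>.smul continuous_const)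
  have hρf : EqOn (f ∘ ρ) f (degenerateSet R f) := fun u hu =>
    (mem_degenerateSet_iff.mp hu).2.2 _ (hρ_re u) (hρ_im u)
  rw [← hρq]
  exact hρf.eq_of_mem_closure hq
    ((hf.continuousAt (isOpen_ball.mem_nhds (hρq ▸ hpR))).comp hρ.continuousAt)
    (hf.continuousAt (isOpen_ball.mem_nhds hqR))

theorem eventually_star_eq_of_mem_interior_degenerateSet {R : ℝ} {f : ℍ[ℝ] → ℍ[ℝ]}
    {q₀ : ℍ[ℝ]} (hq₀ : q₀ ∈ interior (degenerateSet R f)) : ∀ᶠ q in 𝓝 q₀, f (star q) = f q := by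
  filter_upwards [mem_interior_iff_mem_nhds.mp hq₀] with q hq
  exact (mem_degenerateSet_iff.mp hq).2.2 _ (re_star q) (by rw [im_star, norm_neg])

/-- For a non-constant regular function, the degenerate set is closed in
`B(0,R) ∖ ℝ` and has empty interior. -/
theorem degenerate_set_closed_empty_interior
    (R : ℝ) (a : ℕ → ℍ[ℝ]) (f : ℍ[ℝ] → ℍ[ℝ])
    (hf : ∀ q ∈ Metric.ball (0 : ℍ[ℝ]) R, HasSum (fun n => q ^ n * a n) (f q))
    (hnc : ¬∃ w : ℍ[ℝ], ∀ q ∈ Metric.ball (0 : ℍ[ℝ]) R, f q = w) :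
    closure (degenerateSet R f) ∩
        (Metric.ball (0 : ℍ[ℝ]) R \ Set.range (fun x : ℝ => (x : ℍ[ℝ])))
      ⊆ degenerateSet R f ∧
    interior (degenerateSet R f) = ∅ := by
  have hfa := analyticOnNhd_of_hasSum_pow_mul hf
  refine ⟨closure_degenerateSet_inter_subset hfa.continuousOn,
    eq_empty_of_forall_notMem fun q₀ hq₀ => hnc ⟨a 0, ?_⟩⟩
  have hq₀R : q₀ ∈ ball (0 : ℍ[ℝ]) R := (mem_degenerateSet_iff.mp (interior_subset hq₀)).1
  exact eq_coeff_zero_of_star_eq (pos_of_mem_ball hq₀R) hf <|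
    hfa.star_eqOn_ball hq₀R (eventually_star_eq_of_mem_interior_degenerateSet hq₀)
end

section
/- The regular function f(q) = q² + 1 on ℍ maps the open ball B(I, 1/2) centered at an imaginary unit I ∈ 𝕊 onto a non-open subset of ℍ: 0 ∈ f(B(I,1/2)), but for any K ∈ 𝕊 orthogonal to I, f(B(I,1/2)) ∩ L_K ⊆ ℝ, so f(B(I,1/2)) contains no open neighborhood of 0. -/
/-!
Write `q = a + v` with `a = re q` and `v = im q`, so that `im (q² + 1) = 2a v`. If `q² + 1`
lies in `L_K` with `K ⊥ I`, then `2a v` is a multiple of `K`, hence `2a ⟪v, I⟫ = 0`. Close to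
`I` the imaginary part `v` still has positive inner product with `I`, so `a = 0` and
`q² + 1 = 1 - ‖v‖²` is real. A point `(ε/2) K` of the `ε`-ball around `0` therefore never lies
in the image, although `f(I) = 0`.
-/

open Quaternion
open scoped RealInnerProductSpace

theorem inner_pos_of_norm_sub_lt_norm {E : Type*} [NormedAddCommGroup E] [InnerProductSpace ℝ E]
    {x y : E} (h : ‖x - y‖ < ‖y‖) : 0 < ⟪x, y⟫ := by
  have := real_inner_le_norm (y - x) y
  rw [norm_sub_rev] at h
  rw [inner_sub_left, real_inner_self_eq_norm_sq] at this
  nlinarith [norm_nonneg (y - x)]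

namespace Quaternion

theorem sq_eq_neg_one_iff {q : ℍ[ℝ]} : q ^ 2 = -1 ↔ q.re = 0 ∧ ‖q‖ = 1 := by
  constructor
  · intro h
    have hnorm : ‖q‖ = 1 := by
      have := congrArg norm h
      rw [norm_pow, norm_neg, norm_one] at this
      exact (pow_eq_one_iff_of_nonneg (norm_nonneg q) two_ne_zero).1 this
    refine ⟨sq_eq_neg_normSq.1 ?_, hnorm⟩
    rw [h, normSq_eq_norm_mul_self, hnorm, mul_one, coe_one]
  · rintro ⟨hre, hnorm⟩
    rw [sq_eq_neg_normSq.2 hre, normSq_eq_norm_mul_self, hnorm, mul_one, coe_one]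

theorem inner_one_left (q : ℍ[ℝ]) : ⟪1, q⟫ = q.re := by
  simp [inner_def]

theorem exists_sq_eq_neg_one_inner_eq_zero (I : ℍ[ℝ]) :
    ∃ K : ℍ[ℝ], K ^ 2 = -1 ∧ ⟪I, K⟫ = 0 := by
  have hP : Submodule.span ℝ (Set.range ![1, I]) ≠ ⊤ := by
    intro h
    have := finrank_range_le_card (R := ℝ) ![1, I]
    rw [Set.finrank, h, finrank_top, finrank_eq_four] at this
    simp at this
  obtain ⟨w, hw, hw0⟩ := Submodule.exists_mem_ne_zero_of_ne_bot
    (mt Submodule.orthogonal_eq_bot_iff.1 hP)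
  have h1 : ⟪1, w⟫ = 0 :=
    Submodule.inner_right_of_mem_orthogonal
      (Submodule.subset_span (Set.mem_range_self (f := ![1, I]) 0)) hw
  have hI : ⟪I, w⟫ = 0 :=
    Submodule.inner_right_of_mem_orthogonal
      (Submodule.subset_span (Set.mem_range_self (f := ![1, I]) 1)) hw
  refine ⟨‖w‖⁻¹ • w, sq_eq_neg_one_iff.2 ⟨?_, norm_smul_inv_norm hw0⟩, ?_⟩
  · rw [re_smul, ← inner_one_left, h1, smul_zero]
  · rw [inner_smul_right, hI, mul_zero]

theorem im_pow_two (q : ℍ[ℝ]) : (q ^ 2).im = (2 * q.re) • q.im := by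
  ext <;> simp [sq, imI_mul, imJ_mul, imK_mul] <;> ring

theorem inner_im_left {q I : ℍ[ℝ]} (hI : I.re = 0) : ⟪q.im, I⟫ = ⟪q, I⟫ := by
  simp [inner_def, re_mul, hI]

theorem eq_zero_of_sq_add_one_eq_add_smul {I K q : ℍ[ℝ]} (hI : I ^ 2 = -1) (hK : K ^ 2 = -1)
    (hIK : ⟪I, K⟫ = 0) (hq : ‖q - I‖ < 1) {x y : ℝ} (h : q ^ 2 + 1 = x + y • K) : y = 0 := by
  obtain ⟨hIre, hInorm⟩ := sq_eq_neg_one_iff.1 hI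
  obtain ⟨hKre, hKnorm⟩ := sq_eq_neg_one_iff.1 hK
  have him : (2 * q.re) • q.im = y • K := by
    have hKim : K.im = K := by simpa [hKre] using re_add_im K
    simpa [im_pow_two, hKim] using congrArg im h
  have hpos : 0 < ⟪q.im, I⟫ := by
    rw [inner_im_left hIre]
    exact inner_pos_of_norm_sub_lt_norm (hInorm ▸ hq)
  have hre : q.re = 0 := by
    have := congrArg (⟪·, I⟫) him
    simp only [inner_smul_left, real_inner_comm I K, hIK] at this
    simpa [hpos.ne'] using this
  have hyK : y • K = 0 := by rw [← him, hre, mul_zero, zero_smul]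
  exact (smul_eq_zero.1 hyK).resolve_right (norm_ne_zero_iff.1 (hKnorm ▸ one_ne_zero))

end Quaternion

/-- The function `f(q) = q² + 1` maps the ball `B(I, 1/2)` centered at an imaginary
unit `I` onto a non-open set: `0` belongs to the image, for every imaginary unit `K`
orthogonal to `I` the intersection of the image with `L_K = ℝ + Kℝ` consists of real
points, and the image contains no open neighborhood of `0`. -/
theorem square_plus_one_not_open (I : ℍ[ℝ]) (hI : I ^ 2 = -1) :
    (0 : ℍ[ℝ]) ∈ (fun q : ℍ[ℝ] => q ^ 2 + 1) '' Metric.ball I (1 / 2) ∧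
    (∀ K : ℍ[ℝ], K ^ 2 = -1 → ⟪I, K⟫ = 0 →
      ((fun q : ℍ[ℝ] => q ^ 2 + 1) '' Metric.ball I (1 / 2)) ∩
          {p | ∃ x y : ℝ, p = (x : ℍ[ℝ]) + y • K} ⊆
        Set.range (fun x : ℝ => (x : ℍ[ℝ]))) ∧
    ¬∃ ε : ℝ, ε > 0 ∧ Metric.ball (0 : ℍ[ℝ]) ε ⊆
      (fun q : ℍ[ℝ] => q ^ 2 + 1) '' Metric.ball I (1 / 2) := by
  have slice : ∀ K : ℍ[ℝ], K ^ 2 = -1 → ⟪I, K⟫ = 0 →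
      ((fun q : ℍ[ℝ] => q ^ 2 + 1) '' Metric.ball I (1 / 2)) ∩
          {p | ∃ x y : ℝ, p = (x : ℍ[ℝ]) + y • K} ⊆
        Set.range (fun x : ℝ => (x : ℍ[ℝ])) := by
    rintro K hK hIK p ⟨⟨q, hq, rfl⟩, x, y, h⟩
    have hq' : ‖q - I‖ < 1 := by rw [Metric.mem_ball, dist_eq_norm] at hq; linarith
    obtain rfl := eq_zero_of_sq_add_one_eq_add_smul hI hK hIK hq' h
    exact ⟨x, by simp [h]⟩
  refine ⟨⟨I, Metric.mem_ball_self (by norm_num), by simp [hI]⟩, slice, ?_⟩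
  rintro ⟨ε, hε, hball⟩
  obtain ⟨K, hK, hIK⟩ := exists_sq_eq_neg_one_inner_eq_zero I
  obtain ⟨hKre, hKnorm⟩ := sq_eq_neg_one_iff.1 hK
  have hp : (ε / 2) • K ∈ Metric.ball (0 : ℍ[ℝ]) ε := by
    rw [mem_ball_zero_iff, norm_smul, hKnorm, mul_one, Real.norm_of_nonneg (by positivity)]
    linarith
  obtain ⟨x, hx⟩ := slice K hK hIK ⟨hball hp, 0, ε / 2, by simp⟩
  have hx0 : x = 0 := by simpa [hKre] using congrArg (·.re) hx
  have hK0 : K = 0 := by simpa [hx0, hε.ne'] using hx.symm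
  simp [hK0] at hKnorm
end
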